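/- arXiv:1303.0819 — 2 statements merged into one kernel-verified Lean document; each statement's English description precedes it below -/
import Mathlib

section
/- For complex t with |t| < 1, real γ, and complex z, Σ_{ψ₀=0}^{∞} (t^{ψ₀}/ψ₀!) A_{ψ₀}(γ; z) = (1-t)^{γ-2} exp(-zt/(1-t)), where A_{ψ₀}(γ; z) = (Γ(ψ₀+2-γ)/Γ(2-γ)) Σ_{n=0}^{ψ₀} ((-ψ₀)_n/(n!(2-γ)_n)) zⁿ. -/
/-!
With `x = 2 - γ`, the Gamma quotient is the Pochhammer symbol `(x)_n`, and
`(-n)_k = (-1)^k n!/(n-k)!` together with `(x)_n = (x)_k (x+k)_{n-k}` rewrite `tⁿ/n! · A_n(γ; z)`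
as the antidiagonal sum `∑_{k+m=n} (-zt)ᵏ/k! · (x+k)_m tᵐ/m!`. Summing first over `m` with the
binomial series `∑ (x+k)_m tᵐ/m! = (1-t)^(-x-k)` and then over `k` with the exponential series
gives `(1-t)^(-x) exp(-zt/(1-t))`. The rearrangement is justified by absolute convergence: the
double series is dominated by the same series with `x, -zt, t` replaced by their norms.
-/

open Finset Nat

theorem Ring.choose_add_sub_one_eq_ascPochhammer_div {K : Type*} [Field K] [CharZero K]
    (a : K) (n : ℕ) : Ring.choose (a + n - 1) n = (ascPochhammer K n).eval a / n ! := by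
  rw [eq_div_iff (by exact_mod_cast n.factorial_ne_zero), ← Ring.multichoose_eq, mul_comm,
    ← nsmul_eq_mul, Ring.factorial_nsmul_multichoose_eq_ascPochhammer,
    Polynomial.ascPochhammer_smeval_eq_eval]

theorem Complex.hasSum_ascPochhammer_eval_div_factorial_mul_pow (a : ℂ) {t : ℂ} (ht : ‖t‖ < 1) :
    HasSum (fun n ↦ (ascPochhammer ℂ n).eval a / n ! * t ^ n) ((1 - t) ^ (-a)) := by
  have h := (one_div_one_sub_cpow_hasFPowerSeriesOnBall_zero a).hasSum
    (y := t) (by simpa [enorm_eq_nnnorm, ← NNReal.coe_lt_one] using ht)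
  simp only [FormalMultilinearSeries.ofScalars_apply_eq, zero_add, smul_eq_mul,
    Ring.choose_add_sub_one_eq_ascPochhammer_div] at h
  rwa [cpow_neg, ← one_div]

theorem Real.hasSum_ascPochhammer_eval_div_factorial_mul_pow (a : ℝ) {t : ℝ} (ht : |t| < 1) :
    HasSum (fun n ↦ (ascPochhammer ℝ n).eval a / n ! * t ^ n) ((1 - t) ^ (-a)) := by
  have h := (one_div_one_sub_rpow_hasFPowerSeriesOnBall_zero a).hasSum
    (y := t) (by simpa [enorm_eq_nnnorm, ← NNReal.coe_lt_one] using ht)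
  simp only [FormalMultilinearSeries.ofScalars_apply_eq, zero_add, smul_eq_mul,
    Ring.choose_add_sub_one_eq_ascPochhammer_div] at h
  rwa [rpow_neg (by linarith [(abs_lt.mp ht).2]), ← one_div]

theorem ascPochhammer_eval_nonneg {S : Type*} [CommSemiring S] [PartialOrder S] [IsOrderedRing S]
    {s : S} (hs : 0 ≤ s) (n : ℕ) : 0 ≤ (ascPochhammer S n).eval s := by
  induction n with
  | zero => simp
  | succ n ih => rw [ascPochhammer_succ_eval]; positivity

theorem ascPochhammer_eval_add_mul {S : Type*} [CommSemiring S] (s : S) (k m : ℕ) :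
    (ascPochhammer S (k + m)).eval s =
      (ascPochhammer S k).eval s * (ascPochhammer S m).eval (s + k) := by
  simp [← ascPochhammer_mul S k m]

theorem ascPochhammer_eval_ne_zero {K : Type*} [Field K] {a : K} (ha : ∀ k : ℕ, a ≠ -k)
    (n : ℕ) : (ascPochhammer K n).eval a ≠ 0 := by
  rw [Ne, ascPochhammer_eval_eq_zero_iff]
  rintro ⟨k, -, hk⟩
  exact ha k (by rw [hk, neg_neg])

theorem norm_ascPochhammer_eval_le {c : ℂ} {d : ℝ} (h : ‖c‖ ≤ d) (n : ℕ) :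
    ‖(ascPochhammer ℂ n).eval c‖ ≤ (ascPochhammer ℝ n).eval d := by
  induction n with
  | zero => simp
  | succ n ih =>
    simp only [ascPochhammer_succ_eval, norm_mul]
    gcongr
    · exact (norm_nonneg _).trans ih
    · exact (norm_add_le _ _).trans (by simpa using h)

theorem HasSum.sum_antidiagonal {α : Type*} [AddCommMonoid α] [TopologicalSpace α]
    [ContinuousAdd α] [RegularSpace α] {f : ℕ × ℕ → α} {a : α} (hf : HasSum f a) :
    HasSum (fun n ↦ ∑ p ∈ antidiagonal n, f p) a :=
  (HasAntidiagonal.sigmaAntidiagonalEquivProd.hasSum_iff.mpr hf).sigma fun n ↦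
    Finset.hasSum (antidiagonal n) f

/-- With `a = 2 - γ` and `s = -z t`, the antidiagonal sums of this double sequence are the
terms `tⁿ/n! · A_n(γ; z)`; the name comes from `A_n(γ; z) = n! L_n^(1-γ)(z)`. -/
noncomputable def laguerreTerm {K : Type*} [Field K] (a s t : K) (p : ℕ × ℕ) : K :=
  s ^ p.1 / p.1 ! * ((ascPochhammer K p.2).eval (a + p.1) / p.2 ! * t ^ p.2)

theorem Complex.hasSum_laguerreTerm_row (a s : ℂ) {t : ℂ} (ht : ‖t‖ < 1) (k : ℕ) :
    HasSum (fun m ↦ laguerreTerm a s t (k, m)) ((1 - t) ^ (-a) * ((s / (1 - t)) ^ k / k !)) := by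
  have ht1 : 1 - t ≠ 0 := sub_ne_zero.mpr fun h ↦ by simp [← h] at ht
  rw [show (1 - t) ^ (-a) * ((s / (1 - t)) ^ k / k !) = s ^ k / k ! * (1 - t) ^ (-(a + k)) by
    rw [neg_add, ← sub_eq_add_neg, cpow_sub _ _ ht1, cpow_natCast]
    generalize (1 - t) ^ (-a) = u
    ring]
  exact (hasSum_ascPochhammer_eval_div_factorial_mul_pow (a + k) ht).mul_left (s ^ k / k !)

theorem Real.hasSum_laguerreTerm_row (a s : ℝ) {t : ℝ} (ht0 : 0 ≤ t) (ht1 : t < 1) (k : ℕ) :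
    HasSum (fun m ↦ laguerreTerm a s t (k, m)) ((1 - t) ^ (-a) * ((s / (1 - t)) ^ k / k !)) := by
  rw [show (1 - t) ^ (-a) * ((s / (1 - t)) ^ k / k !) = s ^ k / k ! * (1 - t) ^ (-(a + k)) by
    rw [neg_add, ← sub_eq_add_neg, rpow_sub (by linarith), rpow_natCast]
    generalize (1 - t) ^ (-a) = u
    ring]
  exact (hasSum_ascPochhammer_eval_div_factorial_mul_pow (a + k)
    (abs_lt.mpr ⟨by linarith, ht1⟩)).mul_left (s ^ k / k !)

theorem summable_laguerreTerm_of_nonneg {a s t : ℝ} (ha : 0 ≤ a) (hs : 0 ≤ s) (ht0 : 0 ≤ t)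
    (ht1 : t < 1) : Summable (laguerreTerm a s t) := by
  have hnonneg : 0 ≤ laguerreTerm a s t := fun p ↦ by
    have := ascPochhammer_eval_nonneg (S := ℝ) (s := a + p.1) (by positivity) p.2
    unfold laguerreTerm; positivity
  refine (summable_prod_of_nonneg hnonneg).mpr
    ⟨fun k ↦ (Real.hasSum_laguerreTerm_row a s ht0 ht1 k).summable, ?_⟩
  simp only [fun k ↦ (Real.hasSum_laguerreTerm_row a s ht0 ht1 k).tsum_eq]
  exact (Real.summable_pow_div_factorial _).mul_left _

theorem norm_laguerreTerm_le (a s t : ℂ) (p : ℕ × ℕ) :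
    ‖laguerreTerm a s t p‖ ≤ laguerreTerm ‖a‖ ‖s‖ ‖t‖ p := by
  have hc : ‖a + p.1‖ ≤ ‖a‖ + p.1 := (norm_add_le _ _).trans_eq (by simp)
  have h := norm_ascPochhammer_eval_le hc p.2
  simp only [laguerreTerm, norm_mul, norm_div, norm_pow, Complex.norm_natCast]
  gcongr

theorem Complex.hasSum_laguerreTerm (a s : ℂ) {t : ℂ} (ht : ‖t‖ < 1) :
    HasSum (laguerreTerm a s t) ((1 - t) ^ (-a) * exp (s / (1 - t))) := by
  have hsum : Summable (laguerreTerm a s t) :=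
    .of_norm_bounded (summable_laguerreTerm_of_nonneg (norm_nonneg a) (norm_nonneg s)
      (norm_nonneg t) ht) (norm_laguerreTerm_le a s t)
  have hexp : HasSum (fun k ↦ (1 - t) ^ (-a) * ((s / (1 - t)) ^ k / k !))
      ((1 - t) ^ (-a) * exp (s / (1 - t))) := by
    rw [exp_eq_exp_ℂ]
    exact (NormedSpace.expSeries_div_hasSum_exp (s / (1 - t))).mul_left ((1 - t) ^ (-a))
  rw [← (hsum.hasSum.prod_fiberwise (hasSum_laguerreTerm_row a s ht)).unique hexp]
  exact hsum.hasSum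

theorem laguerreTerm_neg_mul_eq {K : Type*} [Field K] [CharZero K] {a : K}
    (ha : ∀ k : ℕ, a ≠ -k) (z t : K) (k m : ℕ) :
    laguerreTerm a (-z * t) t (k, m) = t ^ (k + m) / (k + m) ! *
      ((ascPochhammer K (k + m)).eval a * ((ascPochhammer K k).eval (-((k + m : ℕ) : K)) /
        (k ! * (ascPochhammer K k).eval a) * z ^ k)) := by
  have hfact : (m ! : K) * (k + m).descFactorial k = (k + m) ! := by
    have h := factorial_mul_descFactorial (k.le_add_right m)
    rw [Nat.add_sub_cancel_left] at h
    exact_mod_cast h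
  have hk := ascPochhammer_eval_ne_zero ha k
  rw [ascPochhammer_eval_add_mul, ascPochhammer_eval_neg_eq_descPochhammer,
    descPochhammer_eval_eq_descFactorial, ← hfact, laguerreTerm]
  field_simp
  ring

theorem sum_antidiagonal_laguerreTerm {K : Type*} [Field K] [CharZero K] {a : K}
    (ha : ∀ k : ℕ, a ≠ -k) (z t : K) (n : ℕ) :
    ∑ p ∈ antidiagonal n, laguerreTerm a (-z * t) t p = t ^ n / n ! *
      ((ascPochhammer K n).eval a * ∑ k ∈ range (n + 1), (ascPochhammer K k).eval (-(n : K)) /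
        (k ! * (ascPochhammer K k).eval a) * z ^ k) := by
  rw [Nat.sum_antidiagonal_eq_sum_range_succ_mk, mul_sum, mul_sum]
  refine sum_congr rfl fun k hk ↦ ?_
  obtain ⟨m, rfl⟩ := Nat.exists_eq_add_of_le (Nat.lt_succ_iff.mp (mem_range.mp hk))
  rw [Nat.add_sub_cancel_left, laguerreTerm_neg_mul_eq ha]

/-- generating function for the confluent hypergeometric polynomials
of the second kind. -/
theorem stmt5 (t : ℂ) (ht : ‖t‖ < 1) (γ : ℝ) (hγ : ∀ k : ℕ, 2 - γ ≠ -(k : ℝ)) (z : ℂ) :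
    ∑' ψ₀ : ℕ, t ^ ψ₀ / (Nat.factorial ψ₀ : ℂ) *
      ((Complex.Gamma ((ψ₀ : ℂ) + 2 - γ) / Complex.Gamma (2 - (γ : ℂ))) *
        ∑ n ∈ Finset.range (ψ₀ + 1),
          (ascPochhammer ℂ n).eval (-(ψ₀ : ℂ)) /
            ((Nat.factorial n : ℂ) * (ascPochhammer ℂ n).eval (2 - (γ : ℂ))) * z ^ n) =
    (1 - t) ^ ((γ : ℂ) - 2) * Complex.exp (-z * t / (1 - t)) := by
  have hx : ∀ k : ℕ, 2 - (γ : ℂ) ≠ -k := fun k h ↦ hγ k (by exact_mod_cast h)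
  have hterm : ∀ n : ℕ, t ^ n / n ! * ((Complex.Gamma ((n : ℂ) + 2 - γ) / Complex.Gamma (2 - γ)) *
      ∑ k ∈ range (n + 1), (ascPochhammer ℂ k).eval (-(n : ℂ)) /
        (k ! * (ascPochhammer ℂ k).eval (2 - (γ : ℂ))) * z ^ k) =
      ∑ p ∈ antidiagonal n, laguerreTerm (2 - (γ : ℂ)) (-z * t) t p := fun n ↦ by
    rw [sum_antidiagonal_laguerreTerm hx, ← Complex.Gamma_add_nat_div_Gamma_eq _ hx,
      show 2 - (γ : ℂ) + n = n + 2 - γ by ring]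
  rw [tsum_congr hterm, (Complex.hasSum_laguerreTerm _ _ ht).sum_antidiagonal.tsum_eq, neg_sub]
end

section
/- For a nonnegative integer β₀ (so that a = -β₀ makes 1-a = 1+β₀ a positive integer), b > 0, and complex z, the representation M(-β₀, b, z) = (1/(2πi)) · (Γ(1+β₀)Γ(b)/Γ(b+β₀)) ∮ e^{-zv/(1-v)} v^{-β₀-1} (1-v)^{-b} dv holds, where the contour is a small positively oriented circle around 0 of radius less than 1. -/
/-!
Expand `exp (-z v / (1 - v)) = ∑ₙ (-z)ⁿ vⁿ (1 - v)⁻ⁿ / n!`; the series converges uniformly on the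
circle, so it may be integrated term by term. The `n`-th integral is a Cauchy integral extracting
the coefficient of `v ^ (β₀ - n)` in `(1 - v) ^ (-(b + n))`, namely `(b + n)_(β₀ - n) / (β₀ - n)!`,
and it vanishes for `n > β₀`. Since `(-β₀)_n = (-1)ⁿ β₀! / (β₀ - n)!` and
`Γ(b + β₀) = (b)_n (b + n)_(β₀ - n) Γ(b)`, this is the `n`-th term of `M(-β₀, b, z)`.
-/

open Complex Metric Nat Set Polynomial
open scoped Real

theorem hasSum_circleIntegral_of_dominated {E : Type*} [NormedAddCommGroup E] [NormedSpace ℂ E]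
    [CompleteSpace E] {F : ℕ → ℂ → E} {f : ℂ → E} {c : ℂ} {R : ℝ} {u : ℕ → ℝ}
    (hF : ∀ n, ContinuousOn (F n) (sphere c |R|)) (hFu : ∀ n, ∀ w ∈ sphere c |R|, ‖F n w‖ ≤ u n)
    (hu : Summable u) (hFf : ∀ w ∈ sphere c |R|, HasSum (fun n ↦ F n w) (f w)) :
    HasSum (fun n ↦ ∮ w in C(c, R), F n w) (∮ w in C(c, R), f w) := by
  refine intervalIntegral.hasSum_integral_of_dominated_convergence (fun n _ ↦ |R| * u n)
    (fun n ↦ ?_) (fun n ↦ ?_) ?_ intervalIntegrable_const ?_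
  · have hFn := (hF n).comp_continuous (continuous_circleMap c R) (circleMap_mem_sphere' c R)
    simp only [deriv_circleMap]
    exact (((continuous_circleMap 0 R).mul continuous_const).smul hFn).aestronglyMeasurable
  · refine .of_forall fun θ _ ↦ ?_
    rw [norm_smul, deriv_circleMap, norm_mul, norm_circleMap_zero, norm_I, mul_one]
    exact mul_le_mul_of_nonneg_left (hFu n _ (circleMap_mem_sphere' c R θ)) (abs_nonneg R)
  · exact .of_forall fun _ _ ↦ hu.mul_left _
  · exact .of_forall fun θ _ ↦ (hFf _ (circleMap_mem_sphere' c R θ)).const_smul _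

theorem hasSum_circleIntegral_exp_mul {c : ℂ} {R : ℝ} {h g : ℂ → ℂ}
    (hh : ContinuousOn h (sphere c |R|)) (hg : ContinuousOn g (sphere c |R|)) :
    HasSum (fun n : ℕ ↦ ∮ w in C(c, R), h w ^ n / n ! * g w)
      (∮ w in C(c, R), exp (h w) * g w) := by
  obtain ⟨A, hA⟩ := (isCompact_sphere c |R|).exists_bound_of_continuousOn hh
  obtain ⟨B, hB⟩ := (isCompact_sphere c |R|).exists_bound_of_continuousOn hg
  refine hasSum_circleIntegral_of_dominated (u := fun n ↦ A ^ n / n ! * B) (fun n ↦ by fun_prop)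
    (fun n w hw ↦ ?_) ((Real.summable_pow_div_factorial A).mul_right B) (fun w _ ↦ ?_)
  · have hA0 : 0 ≤ A := (norm_nonneg _).trans (hA w hw)
    rw [norm_mul, norm_div, norm_pow, norm_natCast]
    gcongr
    exacts [hA w hw, hB w hw]
  · have hexp := NormedSpace.exp_series_hasSum_exp' (𝕂 := ℂ) (h w)
    rw [← exp_eq_exp_ℂ] at hexp
    simpa [div_eq_inv_mul, smul_eq_mul] using hexp.mul_right (g w)

theorem one_sub_mem_slitPlane_of_mem_closedBall {r : ℝ} (hr : r < 1) {w : ℂ}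
    (hw : w ∈ closedBall (0 : ℂ) r) : 1 - w ∈ slitPlane := by
  rw [mem_closedBall_zero_iff] at hw
  exact Or.inl (by simpa using (re_le_norm w).trans_lt (hw.trans_lt hr))

theorem isOpen_setOf_one_sub_mem_slitPlane : IsOpen {w : ℂ | 1 - w ∈ slitPlane} :=
  isOpen_slitPlane.preimage (continuous_const.sub continuous_id)

theorem iteratedDeriv_one_sub_cpow_neg (c : ℂ) (m : ℕ) :
    EqOn (iteratedDeriv m fun w : ℂ ↦ (1 - w) ^ (-c))
      (fun w ↦ (ascPochhammer ℂ m).eval c * (1 - w) ^ (-c - m)) {w | 1 - w ∈ slitPlane} := by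
  induction m with
  | zero => intro w _; simp
  | succ m ih =>
    intro w hw
    have hd := (((hasDerivAt_id' w).const_sub 1).cpow_const (c := -c - m) hw).const_mul
      ((ascPochhammer ℂ m).eval c)
    rw [iteratedDeriv_succ, ih.deriv isOpen_setOf_one_sub_mem_slitPlane hw, hd.deriv,
      ascPochhammer_succ_eval]
    push_cast
    ring_nf

theorem differentiableOn_one_sub_cpow {r : ℝ} (hr : r < 1) (c : ℂ) :
    DifferentiableOn ℂ (fun w : ℂ ↦ (1 - w) ^ c) (closedBall 0 r) := fun w hw ↦
  (((hasDerivAt_id' w).const_sub 1).cpow_const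
    (one_sub_mem_slitPlane_of_mem_closedBall hr hw)).differentiableAt.differentiableWithinAt

theorem circleIntegral_zpow_neg_sub_one_mul {f : ℂ → ℂ} {R : ℝ} (hR : 0 < R)
    (hf : DifferentiableOn ℂ f (closedBall 0 R)) (m : ℕ) :
    ∮ w in C(0, R), w ^ (-(m : ℤ) - 1) * f w = 2 * π * I / m ! * iteratedDeriv m f 0 := by
  rw [← smul_eq_mul, ← hf.circleIntegral_one_div_sub_center_pow_smul hR m]
  refine circleIntegral.integral_congr hR.le fun w _ ↦ ?_
  rw [show -(m : ℤ) - 1 = -((m + 1 : ℕ) : ℤ) by push_cast; ring, zpow_neg, zpow_natCast]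
  simp

theorem circleIntegral_zpow_neg_sub_one_mul_one_sub_cpow {r : ℝ} (hr0 : 0 < r) (hr1 : r < 1)
    (c : ℂ) (m : ℕ) :
    ∮ w in C(0, r), w ^ (-(m : ℤ) - 1) * (1 - w) ^ (-c) =
      2 * π * I / m ! * (ascPochhammer ℂ m).eval c := by
  rw [circleIntegral_zpow_neg_sub_one_mul hr0 (differentiableOn_one_sub_cpow hr1 _),
    iteratedDeriv_one_sub_cpow_neg c m (by simp)]
  simp

theorem circleIntegral_pow_mul_one_sub_cpow {r : ℝ} (hr0 : 0 < r) (hr1 : r < 1) (c : ℂ) (k : ℕ) :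
    ∮ w in C(0, r), w ^ (k : ℤ) * (1 - w) ^ c = 0 := by
  simp only [zpow_natCast]
  exact (((differentiableOn_pow k).mul (differentiableOn_one_sub_cpow hr1 c)).mono
    closure_ball_subset_closedBall).diffContOnCl.circleIntegral_eq_zero hr0.le

theorem ascPochhammer_eval_neg_natCast {R : Type*} [CommRing R] (N n : ℕ) :
    (ascPochhammer R n).eval (-(N : R)) = (-1) ^ n * N.descFactorial n := by
  rw [ascPochhammer_eval_neg_eq_descPochhammer, descPochhammer_eval_eq_descFactorial]

theorem ascPochhammer_eval_add {S : Type*} [CommSemiring S] (c : S) (m k : ℕ) :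
    (ascPochhammer S (m + k)).eval c =
      (ascPochhammer S m).eval c * (ascPochhammer S k).eval (c + m) := by
  rw [← ascPochhammer_mul, eval_mul, eval_comp, eval_add, eval_X, eval_natCast]

theorem ne_neg_natCast_of_re_pos {c : ℂ} (hc : 0 < c.re) (k : ℕ) : c ≠ -k := by
  rintro rfl
  simp only [neg_re, natCast_re, Left.neg_pos_iff] at hc
  exact (Nat.cast_nonneg k).not_gt hc

theorem ascPochhammer_eval_ne_zero_of_re_pos {c : ℂ} (hc : 0 < c.re) (k : ℕ) :
    (ascPochhammer ℂ k).eval c ≠ 0 := by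
  simp only [ne_eq, ascPochhammer_eval_eq_zero_iff, not_exists, not_and]
  intro j _ h
  exact ne_neg_natCast_of_re_pos hc j (by rw [h, neg_neg])

theorem Gamma_add_natCast_of_re_pos {c : ℂ} (hc : 0 < c.re) (k : ℕ) :
    Gamma (c + k) = (ascPochhammer ℂ k).eval c * Gamma c := by
  rw [← Gamma_add_nat_div_Gamma_eq c (ne_neg_natCast_of_re_pos hc),
    div_mul_cancel₀ _ (Gamma_ne_zero_of_re_pos hc)]

theorem kummer_integrand_term_eq {z c w : ℂ} (hw0 : w ≠ 0) (hw1 : 1 - w ≠ 0) (N n : ℕ) :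
    (-z * w / (1 - w)) ^ n / n ! * w ^ (-(N : ℤ) - 1) * (1 - w) ^ (-c) =
      (-z) ^ n / n ! * (w ^ ((n : ℤ) - N - 1) * (1 - w) ^ (-(c + n))) := by
  rw [neg_add, cpow_add _ _ hw1, cpow_neg _ (n : ℂ), cpow_natCast,
    show (n : ℤ) - N - 1 = n + (-(N : ℤ) - 1) by ring, zpow_add₀ hw0, zpow_natCast, div_pow,
    mul_pow]
  field_simp

theorem circleIntegral_kummer_integrand_term {r : ℝ} (hr0 : 0 < r) (hr1 : r < 1) (z c : ℂ)
    (N n : ℕ) :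
    ∮ w in C(0, r), (-z * w / (1 - w)) ^ n / n ! * w ^ (-(N : ℤ) - 1) * (1 - w) ^ (-c) =
      (-z) ^ n / n ! * ∮ w in C(0, r), w ^ ((n : ℤ) - N - 1) * (1 - w) ^ (-(c + n)) := by
  rw [← circleIntegral.integral_const_mul]
  refine circleIntegral.integral_congr hr0.le fun w hw ↦ kummer_integrand_term_eq ?_ ?_ N n
  · exact ne_of_mem_sphere hw hr0.ne'
  · exact slitPlane_ne_zero
      (one_sub_mem_slitPlane_of_mem_closedBall hr1 (sphere_subset_closedBall hw))

theorem kummer_coeff_eq_circleIntegral {r : ℝ} (hr0 : 0 < r) (hr1 : r < 1) {c : ℂ}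
    (hc : 0 < c.re) (z : ℂ) (N n : ℕ) :
    (ascPochhammer ℂ n).eval (-(N : ℂ)) / ((ascPochhammer ℂ n).eval c * n !) * z ^ n =
      1 / (2 * π * I) * (Gamma (1 + N) * Gamma c / Gamma (c + N)) *
        ((-z) ^ n / n ! * ∮ w in C(0, r), w ^ ((n : ℤ) - N - 1) * (1 - w) ^ (-(c + n))) := by
  rcases le_or_gt n N with hn | hn
  · obtain ⟨k, rfl⟩ := Nat.exists_eq_add_of_le hn
    have hfac := Nat.factorial_mul_descFactorial hn
    rw [Nat.add_sub_cancel_left] at hfac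
    have hpos : 0 < (c + n).re := by simpa using add_pos_of_pos_of_nonneg hc n.cast_nonneg
    have hPn := ascPochhammer_eval_ne_zero_of_re_pos hc n
    have hPk := ascPochhammer_eval_ne_zero_of_re_pos hpos k
    have hΓ := Gamma_ne_zero_of_re_pos hc
    have h2πI := two_pi_I_ne_zero
    have hk : (k ! : ℂ) ≠ 0 := by exact_mod_cast k.factorial_ne_zero
    rw [show (n : ℤ) - (n + k : ℕ) - 1 = -(k : ℤ) - 1 by push_cast; ring,
      circleIntegral_zpow_neg_sub_one_mul_one_sub_cpow hr0 hr1, ascPochhammer_eval_neg_natCast,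
      Gamma_add_natCast_of_re_pos hc, ascPochhammer_eval_add, add_comm 1,
      Gamma_nat_eq_factorial, ← hfac]
    push_cast
    field_simp
    ring
  · rw [show (n : ℤ) - N - 1 = (n - N - 1 : ℕ) by omega,
      circleIntegral_pow_mul_one_sub_cpow hr0 hr1,
      ascPochhammer_eval_neg_natCast, Nat.descFactorial_eq_zero_iff_lt.mpr hn]
    simp

/-- contour integral representation of the terminating Kummer
polynomial M(-β₀, b, z). -/
theorem stmt8 (β₀ : ℕ) (b : ℝ) (hb : 0 < b) (z : ℂ) (r : ℝ) (hr0 : 0 < r) (hr1 : r < 1) :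
    ∑' n : ℕ, (ascPochhammer ℂ n).eval (-(β₀ : ℂ)) /
        ((ascPochhammer ℂ n).eval (b : ℂ) * (Nat.factorial n : ℂ)) * z ^ n =
    (1 / (2 * Real.pi * Complex.I)) *
      (Complex.Gamma (1 + (β₀ : ℂ)) * Complex.Gamma (b : ℂ) /
        Complex.Gamma ((b : ℂ) + (β₀ : ℂ))) *
      ∮ v in C(0, r),
        Complex.exp (-z * v / (1 - v)) * v ^ (-(β₀ : ℤ) - 1) * (1 - v) ^ (-(b : ℂ)) := by
  have hslit : ∀ w ∈ sphere (0 : ℂ) |r|, 1 - w ∈ slitPlane := fun w hw ↦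
    one_sub_mem_slitPlane_of_mem_closedBall hr1 (sphere_subset_closedBall (abs_of_pos hr0 ▸ hw))
  have hh : ContinuousOn (fun w : ℂ ↦ -z * w / (1 - w)) (sphere 0 |r|) :=
    (continuousOn_const.mul continuousOn_id).div (continuousOn_const.sub continuousOn_id)
      fun w hw ↦ slitPlane_ne_zero (hslit w hw)
  have hg : ContinuousOn (fun w : ℂ ↦ w ^ (-(β₀ : ℤ) - 1) * (1 - w) ^ (-(b : ℂ))) (sphere 0 |r|) :=
    (continuousOn_id.zpow₀ _ fun w hw ↦ Or.inl (ne_of_mem_sphere hw (by positivity))).mul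
      ((continuousOn_const.sub continuousOn_id).cpow_const hslit)
  have hsum := hasSum_circleIntegral_exp_mul hh hg
  simp only [← mul_assoc] at hsum
  rw [← hsum.tsum_eq, ← tsum_mul_left]
  congr 1
  funext n
  rw [circleIntegral_kummer_integrand_term hr0 hr1,
    kummer_coeff_eq_circleIntegral hr0 hr1 (by simpa using hb)]
end
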